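/- arXiv:1012.2063 — 4 statements merged into one kernel-verified Lean document; each statement's English description precedes it below -/
import Mathlib

section
/- Fix an integer k ≥ 0 and a real x > 0. Define h_k(x) as the finite continued fraction h_k(x) = x + 1/(x + 2/(x + 3/(⋯ + k/x))); formally, set b_k(x) = x and b_{j-1}(x) = x + j/b_j(x) for j = k, k-1, …, 1, and put h_k(x) = b_0(x). Then 1 - Φ(x) < φ(x)/h_k(x) if k is even, and 1 - Φ(x) > φ(x)/h_k(x) if k is odd. -/
/-!
Put `J_n(x) = ∫_x^∞ (t - x)^n φ(t) dt` (`tailMoment`), so `J_0 = 1 - Φ`. Integrating by parts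
with `φ' = -t φ` gives `J_1 + x J_0 = φ(x)` and `J_{n+2} + x J_{n+1} = (n + 1) J_n`. Hence
`r_n = x + J_{n+1}/J_n` (`cfTail`) satisfies `r_n = x + (n + 1)/r_{n+1}` and `r_0 = φ/(1 - Φ)`:
the ratio `φ/(1 - Φ)` is `h_k(x)` with its innermost `x` replaced by `r_k > x`. Each level
`y ↦ x + j/y` reverses order, so this replacement increases the continued fraction when `k` is
even and decreases it when `k` is odd.
-/

open MeasureTheory Real

/-- Standard Gaussian density. -/
noncomputable def gaussPdf (x : ℝ) : ℝ := Real.exp (-x ^ 2 / 2) / Real.sqrt (2 * Real.pi)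

/-- Standard Gaussian distribution function. -/
noncomputable def gaussCdf (x : ℝ) : ℝ := ∫ t in Set.Iic x, gaussPdf t

/-- Finite continued fraction `hcf k g x = x + 1/(x + 2/(⋯ + k/(g x)))`,
with `hcf 0 g = g`. -/
noncomputable def hcf : ℕ → (ℝ → ℝ) → ℝ → ℝ
  | 0, g => g
  | (k + 1), g => hcf k (fun x => x + ((k : ℝ) + 1) / g x)

open Filter Set Asymptotics

lemma gaussPdf_pos (x : ℝ) : 0 < gaussPdf x := by
  unfold gaussPdf; positivity

lemma gaussPdf_eq_gaussianPDFReal : gaussPdf = ProbabilityTheory.gaussianPDFReal 0 1 := by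
  ext t
  simp [gaussPdf, ProbabilityTheory.gaussianPDFReal, div_eq_inv_mul]

lemma hasDerivAt_gaussPdf (t : ℝ) : HasDerivAt gaussPdf (-t * gaussPdf t) t := by
  have h := (((hasDerivAt_pow 2 t).neg.div_const 2).exp).div_const (√(2 * π))
  exact h.congr_deriv (by simp only [gaussPdf, Pi.neg_apply]; ring)

lemma gaussPdf_isBigO : gaussPdf =O[atTop] fun t => exp (-(1 / 2) * t ^ 2) :=
  ((isBigO_refl _ _).const_mul_left (√(2 * π))⁻¹).congr_left fun t => by
    simp only [gaussPdf]; ring_nf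

lemma sub_pow_mul_gaussPdf_isLittleO (n : ℕ) (x : ℝ) :
    (fun t => (t - x) ^ n * gaussPdf t) =o[atTop] fun t => exp (-(1 / 2) * t) := by
  have hsub : (fun t : ℝ => t - x) =O[atTop] fun t => t :=
    (isBigO_refl _ _).sub (isLittleO_const_id_atTop x).isBigO
  have hexp := rpow_mul_exp_neg_mul_sq_isLittleO_exp_neg (b := 1 / 2) (by norm_num) n
  simp only [rpow_natCast] at hexp
  exact ((hsub.pow n).mul gaussPdf_isBigO).trans_isLittleO hexp

lemma integrableOn_sub_pow_mul_gaussPdf (n : ℕ) (x : ℝ) :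
    IntegrableOn (fun t => (t - x) ^ n * gaussPdf t) (Ioi x) :=
  integrable_of_isBigO_exp_neg (by norm_num)
    (by unfold gaussPdf; fun_prop) (sub_pow_mul_gaussPdf_isLittleO n x).isBigO

lemma tendsto_sub_pow_mul_gaussPdf (n : ℕ) (x : ℝ) :
    Tendsto (fun t => (t - x) ^ n * gaussPdf t) atTop (nhds 0) :=
  (sub_pow_mul_gaussPdf_isLittleO n x).trans_tendsto <|
    tendsto_exp_atBot.comp <| tendsto_id.const_mul_atTop_of_neg (by norm_num)

lemma setIntegral_Ioi_gaussPdf (x : ℝ) : ∫ t in Ioi x, gaussPdf t = 1 - gaussCdf x := by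
  have hint : Integrable gaussPdf := by
    rw [gaussPdf_eq_gaussianPDFReal]; exact ProbabilityTheory.integrable_gaussianPDFReal 0 1
  have htot : ∫ t, gaussPdf t = 1 := by
    rw [gaussPdf_eq_gaussianPDFReal]
    exact ProbabilityTheory.integral_gaussianPDFReal_eq_one 0 one_ne_zero
  rw [gaussCdf, ← htot, ← intervalIntegral.integral_Iic_add_Ioi hint.integrableOn hint.integrableOn]
  ring

noncomputable def tailMoment (n : ℕ) (x : ℝ) : ℝ := ∫ t in Ioi x, (t - x) ^ n * gaussPdf t

lemma tailMoment_zero (x : ℝ) : tailMoment 0 x = 1 - gaussCdf x := by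
  simp [tailMoment, setIntegral_Ioi_gaussPdf]

lemma tailMoment_pos (n : ℕ) (x : ℝ) : 0 < tailMoment n x := by
  have hpos : ∀ t ∈ Ioi x, 0 < (t - x) ^ n * gaussPdf t :=
    fun t ht => mul_pos (pow_pos (sub_pos.2 ht) n) (gaussPdf_pos t)
  rw [tailMoment, setIntegral_pos_iff_support_of_nonneg_ae
    (ae_restrict_of_forall_mem measurableSet_Ioi fun t ht => (hpos t ht).le)
    (integrableOn_sub_pow_mul_gaussPdf n x)]
  have : Ioi x ⊆ Function.support (fun t => (t - x) ^ n * gaussPdf t) ∩ Ioi x :=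
    fun t ht => ⟨(hpos t ht).ne', ht⟩
  refine lt_of_lt_of_le ?_ (measure_mono this)
  simp

/-- The truncated `m - 1` is harmless, being multiplied by `m`. -/
lemma tailMoment_succ_add_mul (m : ℕ) (x : ℝ) :
    tailMoment (m + 1) x + x * tailMoment m x
      = m * tailMoment (m - 1) x + (x - x) ^ m * gaussPdf x := by
  have hI := integrableOn_sub_pow_mul_gaussPdf
  have hderiv : ∀ t ∈ Ici x, HasDerivAt (fun t => -((t - x) ^ m * gaussPdf t))
      ((t - x) ^ (m + 1) * gaussPdf t + x * ((t - x) ^ m * gaussPdf t)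
        - m * ((t - x) ^ (m - 1) * gaussPdf t)) t := by
    intro t _
    have hpow : HasDerivAt (fun t => (t - x) ^ m) (m * (t - x) ^ (m - 1) * 1) t :=
      ((hasDerivAt_id t).sub_const x).pow m
    refine ((hpow.mul (hasDerivAt_gaussPdf t)).neg).congr_deriv ?_
    ring
  have key := integral_Ioi_of_hasDerivAt_of_tendsto' hderiv
    (((hI (m + 1) x).add ((hI m x).const_mul x)).sub ((hI (m - 1) x).const_mul m))
    (by simpa using (tendsto_sub_pow_mul_gaussPdf m x).neg)
  rw [integral_sub, integral_add, integral_const_mul, integral_const_mul] at key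
  · simp only [tailMoment]
    linarith
  all_goals first
    | exact hI _ x
    | exact (hI _ x).const_mul _
    | exact (hI _ x).add ((hI _ x).const_mul _)

lemma tailMoment_one_add_mul (x : ℝ) :
    tailMoment 1 x + x * tailMoment 0 x = gaussPdf x := by
  simpa using tailMoment_succ_add_mul 0 x

lemma tailMoment_add_two_add_mul (n : ℕ) (x : ℝ) :
    tailMoment (n + 2) x + x * tailMoment (n + 1) x = (n + 1) * tailMoment n x := by
  simpa using tailMoment_succ_add_mul (n + 1) x

noncomputable def cfTail (n : ℕ) (x : ℝ) : ℝ := x + tailMoment (n + 1) x / tailMoment n x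

lemma lt_cfTail (n : ℕ) (x : ℝ) : x < cfTail n x :=
  lt_add_of_pos_right x (div_pos (tailMoment_pos _ _) (tailMoment_pos _ _))

lemma cfTail_eq_add_div (n : ℕ) (x : ℝ) : cfTail n x = x + (n + 1) / cfTail (n + 1) x := by
  have h := tailMoment_add_two_add_mul n x
  have h0 := tailMoment_pos n x
  have h1 := tailMoment_pos (n + 1) x
  have hsucc : cfTail (n + 1) x = (n + 1) * tailMoment n x / tailMoment (n + 1) x := by
    rw [cfTail, eq_div_iff h1.ne', add_mul, div_mul_cancel₀ _ h1.ne']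
    linarith
  rw [hsucc, cfTail, div_div_eq_mul_div, mul_div_mul_left _ _ (by positivity)]

lemma gaussPdf_div_cfTail_zero (x : ℝ) : gaussPdf x / cfTail 0 x = 1 - gaussCdf x := by
  have h0 := (tailMoment_pos 0 x).ne'
  have hcf0 : cfTail 0 x = gaussPdf x / tailMoment 0 x := by
    rw [← tailMoment_one_add_mul, cfTail, add_div, mul_div_cancel_right₀ _ h0, add_comm]
  rw [hcf0, div_div_cancel₀ (gaussPdf_pos x).ne', tailMoment_zero]

lemma hcf_eq_of_forall_eq_add_div (r : ℕ → ℝ → ℝ)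
    (hr : ∀ n x, r n x = x + (n + 1) / r (n + 1) x) (k : ℕ) : hcf k (r k) = r 0 := by
  induction k with
  | zero => rfl
  | succ k ih =>
    have hk : (fun x => x + ((k : ℝ) + 1) / r (k + 1) x) = r k := funext fun x => (hr k x).symm
    rw [hcf, hk, ih]

lemma hcf_pos (k : ℕ) {g : ℝ → ℝ} {x : ℝ} (hx : 0 < x) (hg : 0 < g x) : 0 < hcf k g x := by
  induction k generalizing g with
  | zero => exact hg
  | succ k ih => exact ih (by positivity)

lemma hcf_lt_hcf (k : ℕ) {g₁ g₂ : ℝ → ℝ} {x : ℝ} (hx : 0 < x) (hg₁ : 0 < g₁ x)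
    (hg : g₁ x < g₂ x) :
    (Even k → hcf k g₁ x < hcf k g₂ x) ∧ (Odd k → hcf k g₂ x < hcf k g₁ x) := by
  induction k generalizing g₁ g₂ with
  | zero => exact ⟨fun _ => hg, fun h => absurd h Nat.not_odd_zero⟩
  | succ k ih =>
    have hflip : x + ((k : ℝ) + 1) / g₂ x < x + ((k : ℝ) + 1) / g₁ x :=
      add_lt_add_right (div_lt_div_of_pos_left (by positivity) hg₁ hg) x
    obtain ⟨hev, hodd⟩ := ih (g₁ := fun y => y + ((k : ℝ) + 1) / g₂ y)
      (g₂ := fun y => y + ((k : ℝ) + 1) / g₁ y) (by have := hg₁.trans hg; positivity) hflip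
    exact ⟨fun h => hodd (Nat.not_even_iff_odd.mp (Nat.even_add_one.mp h)),
      fun h => hev (Nat.not_odd_iff_even.mp (Nat.odd_add_one.mp h))⟩

/-- Continued fraction bounds: 1 - Φ(x) < φ(x)/h_k(x) if k is even and
1 - Φ(x) > φ(x)/h_k(x) if k is odd, where h_k(x) = x + 1/(x + 2/(⋯ + k/x)). -/
theorem continued_fraction_bounds (k : ℕ) (x : ℝ) (hx : 0 < x) :
    (Even k → 1 - gaussCdf x < gaussPdf x / hcf k (fun t => t) x) ∧
    (Odd k → 1 - gaussCdf x > gaussPdf x / hcf k (fun t => t) x) := by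
  have hφ := gaussPdf_pos x
  rw [← gaussPdf_div_cfTail_zero, ← hcf_eq_of_forall_eq_add_div cfTail cfTail_eq_add_div k]
  obtain ⟨hev, hodd⟩ := hcf_lt_hcf k (g₁ := fun t => t) hx hx (lt_cfTail k x)
  have hcf_id_pos : 0 < hcf k (fun t => t) x := hcf_pos k hx hx
  have hcf_tail_pos : 0 < hcf k (cfTail k) x := hcf_pos k hx (hx.trans (lt_cfTail k x))
  exact ⟨fun hk => div_lt_div_of_pos_left hφ hcf_id_pos (hev hk),
    fun hk => div_lt_div_of_pos_left hφ hcf_tail_pos (hodd hk)⟩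
end

section
/- For every integer k ≥ 0, the constant c_k* satisfies k + 1/2 < c_k* < k + 1. -/
/-!
With `J n = ∫₀^π sinⁿ`, the Wallis recursion `J (n + 2) = (n + 1) / (n + 2) * J n` makes
`(n + 1) * J n * J (n + 1) = 2π` invariant, whence `c_k* = 2π / J k ²`, and `k + 1/2 < c_k*` becomes
`(2k + 1) * J k ² < 4π`. The sequence `(2n + 1) * J n ²` increases strictly in steps of two, and
since `J` is decreasing it is at most `4π + 2π / (n + 1)`; so it stays below `4π`.
The upper bound `c_k* < k + 1` is the lower bound at `k + 1` read through `c_{k+1}* c_k* = (k + 1)²`.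
-/

open MeasureTheory Real

/-- The constants `c_k^*`: `c_0^* = 2/π` and `c_k^* = k² / c_{k-1}^*`. -/
noncomputable def cstar : ℕ → ℝ
  | 0 => 2 / Real.pi
  | (k + 1) => ((k : ℝ) + 1) ^ 2 / cstar k

open Filter Topology

noncomputable def sinPowIntegral (n : ℕ) : ℝ := ∫ x in (0 : ℝ)..π, sin x ^ n

lemma sinPowIntegral_pos (n : ℕ) : 0 < sinPowIntegral n := integral_sin_pow_pos n

lemma sinPowIntegral_zero : sinPowIntegral 0 = π := by simp [sinPowIntegral]

lemma sinPowIntegral_one : sinPowIntegral 1 = 2 := by norm_num [sinPowIntegral, integral_sin]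

lemma sinPowIntegral_add_two (n : ℕ) :
    sinPowIntegral (n + 2) = (n + 1) / (n + 2) * sinPowIntegral n := by
  rw [sinPowIntegral, integral_sin_pow]
  simp [sinPowIntegral]

lemma sinPowIntegral_succ_le (n : ℕ) : sinPowIntegral (n + 1) ≤ sinPowIntegral n :=
  integral_sin_pow_succ_le n

lemma succ_mul_sinPowIntegral_mul_sinPowIntegral_succ (n : ℕ) :
    (n + 1) * (sinPowIntegral n * sinPowIntegral (n + 1)) = 2 * π := by
  induction n with
  | zero => simp [sinPowIntegral_zero, sinPowIntegral_one]; ring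
  | succ n ih =>
    rw [sinPowIntegral_add_two]
    push_cast
    field_simp
    linear_combination ((n : ℝ) + 2) * ih

lemma cstar_eq_two_pi_div_sq (k : ℕ) : cstar k = 2 * π / sinPowIntegral k ^ 2 := by
  induction k with
  | zero => rw [cstar, sinPowIntegral_zero]; field_simp
  | succ k ih =>
    have := (sinPowIntegral_pos k).ne'
    have := (sinPowIntegral_pos (k + 1)).ne'
    have h := succ_mul_sinPowIntegral_mul_sinPowIntegral_succ k
    rw [cstar, ih]
    field_simp
    linear_combination ((k + 1) * (sinPowIntegral k * sinPowIntegral (k + 1)) + 2 * π) * h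

noncomputable def wallisSeq (n : ℕ) : ℝ := (2 * n + 1) * sinPowIntegral n ^ 2

lemma wallisSeq_lt_add_two (n : ℕ) : wallisSeq n < wallisSeq (n + 2) := by
  have hJ := pow_pos (sinPowIntegral_pos n) 2
  have key : (2 * ((n : ℝ) + 2) + 1) * ((n + 1) / (n + 2)) ^ 2 = (2 * n + 1) + 1 / (n + 2) ^ 2 := by
    field_simp
    ring
  have : wallisSeq (n + 2) = wallisSeq n + sinPowIntegral n ^ 2 / (n + 2) ^ 2 := by
    rw [wallisSeq, wallisSeq, sinPowIntegral_add_two, mul_pow, ← mul_assoc]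
    push_cast
    rw [key]
    ring
  rw [this]
  have : 0 < sinPowIntegral n ^ 2 / ((n : ℝ) + 2) ^ 2 := by positivity
  linarith

lemma sq_mul_sinPowIntegral_sq_le (n : ℕ) :
    ((n : ℝ) + 1) ^ 2 * sinPowIntegral n ^ 2 ≤ 2 * π * (n + 2) := by
  have hstep : (n + 1) * sinPowIntegral n ≤ (n + 2) * sinPowIntegral (n + 1) := by
    have := sinPowIntegral_succ_le (n + 1)
    rw [sinPowIntegral_add_two, div_mul_eq_mul_div, div_le_iff₀ (by positivity)] at this
    linarith
  have hnonneg : 0 ≤ ((n : ℝ) + 1) * sinPowIntegral n :=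
    mul_nonneg (by positivity) (sinPowIntegral_pos n).le
  calc ((n : ℝ) + 1) ^ 2 * sinPowIntegral n ^ 2
      = ((n + 1) * sinPowIntegral n) * ((n + 1) * sinPowIntegral n) := by ring
    _ ≤ ((n + 1) * sinPowIntegral n) * ((n + 2) * sinPowIntegral (n + 1)) :=
        mul_le_mul_of_nonneg_left hstep hnonneg
    _ = 2 * π * (n + 2) := by
        linear_combination ((n : ℝ) + 2) * succ_mul_sinPowIntegral_mul_sinPowIntegral_succ n

lemma wallisSeq_le (n : ℕ) : wallisSeq n ≤ 4 * π + 2 * π * (1 / ((n : ℝ) + 1)) := by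
  have h := sq_mul_sinPowIntegral_sq_le n
  have hn : (0 : ℝ) < n + 1 := by positivity
  rw [wallisSeq, ← mul_le_mul_iff_left₀ (pow_pos hn 2)]
  field_simp
  nlinarith [pi_pos]

lemma wallisSeq_le_four_pi (n : ℕ) : wallisSeq n ≤ 4 * π := by
  have hmono : Monotone fun m : ℕ => wallisSeq (n + 2 * m) :=
    monotone_nat_of_le_succ fun m => (wallisSeq_lt_add_two (n + 2 * m)).le
  have hlim : Tendsto (fun m : ℕ => 4 * π + 2 * π * (1 / (((n + 2 * m : ℕ) : ℝ) + 1)))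
      atTop (𝓝 (4 * π)) := by
    have := (tendsto_one_div_add_atTop_nhds_zero_nat (𝕜 := ℝ)).comp
      (tendsto_atTop_mono (fun m => by omega : ∀ m, m ≤ n + 2 * m) tendsto_id)
    simpa using (this.const_mul (2 * π)).const_add (4 * π)
  exact ge_of_tendsto' hlim fun m => (hmono (Nat.zero_le m)).trans (wallisSeq_le _)

lemma wallisSeq_lt_four_pi (n : ℕ) : wallisSeq n < 4 * π :=
  (wallisSeq_lt_add_two n).trans_le (wallisSeq_le_four_pi _)

lemma add_half_lt_cstar (k : ℕ) : (k : ℝ) + 1 / 2 < cstar k := by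
  have hJ := pow_pos (sinPowIntegral_pos k) 2
  have h := wallisSeq_lt_four_pi k
  rw [wallisSeq] at h
  rw [cstar_eq_two_pi_div_sq, lt_div_iff₀ hJ]
  linarith

/-- The constants `c_k^*` satisfy k + 1/2 < c_k^* < k + 1. -/
theorem cstar_basic_bounds (k : ℕ) :
    (k : ℝ) + 1 / 2 < cstar k ∧ cstar k < (k : ℝ) + 1 := by
  have hk := add_half_lt_cstar k
  have hpos : 0 < cstar k := lt_trans (by positivity) hk
  have hsucc := add_half_lt_cstar (k + 1)
  rw [cstar, lt_div_iff₀ hpos] at hsucc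
  push_cast at hsucc
  exact ⟨hk, by nlinarith⟩
end

section
/- For every integer k ≥ 0, the constant c_k* satisfies 1/(8(k+1)) < c_k* − k − 1/2 < 1/(8·c_k*) < 1/(8(k + 1/2)). -/
open MeasureTheory Real

/-! By the Wallis product, `cstar (2m) = (2/π)(2m+1) W m` with
`(2m+1)/(2m+2) · π/2 ≤ W m ≤ π/2`, which pins `cstar k` to `[k, k+1]`; hence `cstar k / B k → 1`
for every `B k ∈ (k, k+1]`. Since `(k+1)² cstar (k+2) = (k+2)² cstar k`, a sequence `B` growing
faster than this along steps of two makes `cstar k / B k` strictly decreasing along steps of two,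
so it stays above its limit `1` and `B < cstar`; symmetrically for slower growth. With
`s = k + 1/2`, the comparison sequences `s + 1/(8(k+1))` and `u = s + s/(8s² + 1)` give the first
inequality and `cstar k < u`. Since `u (u - s) < 1/8` and `x ↦ x (x - s)` increases for `x > s`,
the second inequality follows, and the third is `s < cstar k`. -/

open Filter Topology Set

theorem lt_of_tendsto_of_add_two_lt {α : Type*} [TopologicalSpace α] [LinearOrder α]
    [OrderClosedTopology α] {q : ℕ → α} {a : α} (hq : ∀ k, q (k + 2) < q k)
    (h : Tendsto q atTop (𝓝 a)) (k : ℕ) : a < q k := by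
  have hanti : Antitone fun m ↦ q (k + 2 + 2 * m) :=
    antitone_nat_of_succ_le fun m ↦ by
      simpa only [mul_add, ← add_assoc] using (hq (k + 2 + 2 * m)).le
  have hlim : Tendsto (fun m ↦ q (k + 2 + 2 * m)) atTop (𝓝 a) :=
    h.comp <| tendsto_atTop_mono (fun m ↦ show m ≤ k + 2 + 2 * m by omega) tendsto_id
  simpa using (hanti.le_of_tendsto hlim 0).trans_lt (hq k)

theorem tendsto_div_nhds_one_of_mem_Icc {f g : ℕ → ℝ}
    (hf : ∀ k : ℕ, f k ∈ Icc (k : ℝ) (k + 1)) (hg : ∀ k : ℕ, g k ∈ Icc (k : ℝ) (k + 1)) :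
    Tendsto (fun k ↦ f k / g k) atTop (𝓝 1) := by
  have hupper : Tendsto (fun k : ℕ ↦ 1 + 1 / (k : ℝ)) atTop (𝓝 1) := by
    simpa using (tendsto_const_nhds (x := (1 : ℝ))).add tendsto_one_div_atTop_nhds_zero_nat
  refine tendsto_of_tendsto_of_tendsto_of_le_of_le' (tendsto_natCast_div_add_atTop 1) hupper
    ?_ ?_ <;> filter_upwards [eventually_ge_atTop 1] with k hk
  all_goals
    have hk : (1 : ℝ) ≤ k := by exact_mod_cast hk
    obtain ⟨hf₁, hf₂⟩ := hf k
    obtain ⟨hg₁, hg₂⟩ := hg k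
  · exact div_le_div₀ (by linarith) hf₁ (by linarith) hg₂
  · rw [one_add_div (by positivity)]
    exact div_le_div₀ (by linarith) hf₂ (by linarith) hg₁

theorem cstar_pos (k : ℕ) : 0 < cstar k := by
  induction k with
  | zero => exact div_pos two_pos pi_pos
  | succ k ih => rw [cstar]; positivity

theorem cstar_mul_cstar_succ (k : ℕ) : cstar k * cstar (k + 1) = ((k : ℝ) + 1) ^ 2 := by
  rw [cstar, mul_div_cancel₀ _ (cstar_pos k).ne']

theorem cstar_add_two (k : ℕ) :
    ((k : ℝ) + 1) ^ 2 * cstar (k + 2) = ((k : ℝ) + 2) ^ 2 * cstar k := by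
  have h₁ := cstar_mul_cstar_succ k
  have h₂ := cstar_mul_cstar_succ (k + 1)
  push_cast at h₂
  linear_combination cstar k * h₂ - cstar (k + 2) * h₁

theorem cstar_two_mul (m : ℕ) : cstar (2 * m) = 2 / π * (2 * m + 1) * Real.Wallis.W m := by
  induction m with
  | zero => simp [cstar, Real.Wallis.W]
  | succ m ih =>
    have h := cstar_add_two (2 * m)
    rw [show 2 * (m + 1) = 2 * m + 2 by ring, Real.Wallis.W_succ]
    push_cast at h ⊢
    rw [ih] at h
    refine mul_left_cancel₀ (by positivity : (2 * (m : ℝ) + 1) ^ 2 ≠ 0) ?_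
    rw [h]
    field_simp
    ring

theorem cstar_two_mul_mem_Icc (m : ℕ) :
    cstar (2 * m) ∈ Icc ((2 * (m : ℝ) + 1) ^ 2 / (2 * (m : ℝ) + 2)) (2 * (m : ℝ) + 1) := by
  have hW₁ := Real.Wallis.le_W m
  have hW₂ := Real.Wallis.W_le m
  rw [cstar_two_mul]
  constructor
  · calc (2 * (m : ℝ) + 1) ^ 2 / (2 * m + 2)
        = 2 / π * (2 * m + 1) * ((2 * m + 1) / (2 * m + 2) * (π / 2)) := by
          field_simp
      _ ≤ 2 / π * (2 * m + 1) * Real.Wallis.W m := by gcongr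
  · calc 2 / π * (2 * m + 1) * Real.Wallis.W m ≤ 2 / π * (2 * m + 1) * (π / 2) := by gcongr
      _ = 2 * m + 1 := by field_simp

theorem cstar_mem_Icc (k : ℕ) : cstar k ∈ Icc (k : ℝ) (k + 1) := by
  obtain ⟨m, rfl | rfl⟩ := Nat.even_or_odd' k
  all_goals
    obtain ⟨hlow, hupp⟩ := cstar_two_mul_mem_Icc m
    rw [div_le_iff₀ (by positivity)] at hlow
    push_cast
  · exact ⟨by nlinarith, by linarith⟩
  · have hprod := cstar_mul_cstar_succ (2 * m)
    have h₀ := cstar_pos (2 * m)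
    have h₁ := cstar_pos (2 * m + 1)
    push_cast at hprod
    exact ⟨by nlinarith, by nlinarith⟩

theorem lt_cstar {B : ℕ → ℝ} (hB : ∀ k : ℕ, B k ∈ Ioc (k : ℝ) (k + 1))
    (hstep : ∀ k : ℕ, ((k : ℝ) + 2) ^ 2 * B k < ((k : ℝ) + 1) ^ 2 * B (k + 2)) (k : ℕ) :
    B k < cstar k := by
  have hBpos (k : ℕ) : 0 < B k := (Nat.cast_nonneg k).trans_lt (hB k).1
  have hq (k : ℕ) : cstar (k + 2) / B (k + 2) < cstar k / B k := by
    rw [div_lt_div_iff₀ (hBpos _) (hBpos _)]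
    refine lt_of_mul_lt_mul_left ?_ (sq_nonneg ((k : ℝ) + 1))
    calc ((k : ℝ) + 1) ^ 2 * (cstar (k + 2) * B k)
          = cstar k * (((k : ℝ) + 2) ^ 2 * B k) := by linear_combination B k * cstar_add_two k
      _ < cstar k * (((k : ℝ) + 1) ^ 2 * B (k + 2)) :=
          mul_lt_mul_of_pos_left (hstep k) (cstar_pos k)
      _ = ((k : ℝ) + 1) ^ 2 * (cstar k * B (k + 2)) := by ring
  have hlim := tendsto_div_nhds_one_of_mem_Icc cstar_mem_Icc fun k ↦ Ioc_subset_Icc_self (hB k)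
  exact (one_lt_div (hBpos k)).1 (lt_of_tendsto_of_add_two_lt hq hlim k)

theorem cstar_lt {B : ℕ → ℝ} (hB : ∀ k : ℕ, B k ∈ Ioc (k : ℝ) (k + 1))
    (hstep : ∀ k : ℕ, ((k : ℝ) + 1) ^ 2 * B (k + 2) < ((k : ℝ) + 2) ^ 2 * B k) (k : ℕ) :
    cstar k < B k := by
  have hq (k : ℕ) : B (k + 2) / cstar (k + 2) < B k / cstar k := by
    rw [div_lt_div_iff₀ (cstar_pos _) (cstar_pos _)]
    refine lt_of_mul_lt_mul_left ?_ (sq_nonneg ((k : ℝ) + 1))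
    calc ((k : ℝ) + 1) ^ 2 * (B (k + 2) * cstar k)
          = cstar k * (((k : ℝ) + 1) ^ 2 * B (k + 2)) := by ring
      _ < cstar k * (((k : ℝ) + 2) ^ 2 * B k) :=
          mul_lt_mul_of_pos_left (hstep k) (cstar_pos k)
      _ = ((k : ℝ) + 1) ^ 2 * (B k * cstar (k + 2)) := by
          linear_combination (-B k) * cstar_add_two k
  have hlim := tendsto_div_nhds_one_of_mem_Icc (fun k ↦ Ioc_subset_Icc_self (hB k)) cstar_mem_Icc
  exact (one_lt_div (cstar_pos k)).1 (lt_of_tendsto_of_add_two_lt hq hlim k)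

noncomputable def cstarLower (k : ℕ) : ℝ := k + 1 / 2 + 1 / (8 * (k + 1))

noncomputable def cstarUpper (k : ℕ) : ℝ := k + 1 / 2 + (k + 1 / 2) / (8 * (k + 1 / 2) ^ 2 + 1)

theorem cstarLower_mem_Ioc (k : ℕ) : cstarLower k ∈ Ioc (k : ℝ) (k + 1) := by
  have h : 1 / (8 * ((k : ℝ) + 1)) ≤ 1 / 2 := by
    gcongr; linarith [(Nat.cast_nonneg k : (0 : ℝ) ≤ k)]
  constructor <;> unfold cstarLower
  · have : 0 < 1 / (8 * ((k : ℝ) + 1)) := by positivity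
    linarith
  · linarith

theorem cstarLower_step (k : ℕ) :
    ((k : ℝ) + 2) ^ 2 * cstarLower k < ((k : ℝ) + 1) ^ 2 * cstarLower (k + 2) := by
  have h : ((k : ℝ) + 1) ^ 2 * cstarLower (k + 2) - ((k : ℝ) + 2) ^ 2 * cstarLower k
      = (3 * k + 1) / (8 * (k + 1) * (k + 3)) := by
    unfold cstarLower; push_cast; field_simp; ring
  have : 0 < (3 * (k : ℝ) + 1) / (8 * (k + 1) * (k + 3)) := by positivity
  linarith

theorem cstarUpper_mem_Ioc (k : ℕ) : cstarUpper k ∈ Ioc (k : ℝ) (k + 1) := by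
  have hs : (0 : ℝ) < k + 1 / 2 := by positivity
  have h : ((k : ℝ) + 1 / 2) / (8 * (k + 1 / 2) ^ 2 + 1) ≤ 1 / 2 := by
    rw [div_le_iff₀ (by positivity)]; nlinarith
  constructor <;> unfold cstarUpper
  · have : 0 < ((k : ℝ) + 1 / 2) / (8 * (k + 1 / 2) ^ 2 + 1) := by positivity
    linarith
  · linarith

theorem cstarUpper_step (k : ℕ) :
    ((k : ℝ) + 1) ^ 2 * cstarUpper (k + 2) < ((k : ℝ) + 2) ^ 2 * cstarUpper k := by
  have h : ((k : ℝ) + 2) ^ 2 * cstarUpper k - ((k : ℝ) + 1) ^ 2 * cstarUpper (k + 2)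
      = (28 * k ^ 2 + 84 * k + 18) / ((8 * k ^ 2 + 8 * k + 3) * (8 * k ^ 2 + 40 * k + 51)) := by
    unfold cstarUpper; push_cast; field_simp; ring
  have : 0 < (28 * (k : ℝ) ^ 2 + 84 * k + 18) /
      ((8 * k ^ 2 + 8 * k + 3) * (8 * k ^ 2 + 40 * k + 51)) := by positivity
  linarith

theorem cstarUpper_mul_sub_lt (k : ℕ) :
    cstarUpper k * (cstarUpper k - k - 1 / 2) < 1 / 8 := by
  have h : 1 / 8 - cstarUpper k * (cstarUpper k - k - 1 / 2)
      = 1 / (8 * (8 * ((k : ℝ) + 1 / 2) ^ 2 + 1) ^ 2) := by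
    unfold cstarUpper; field_simp; ring
  have : 0 < 1 / (8 * (8 * ((k : ℝ) + 1 / 2) ^ 2 + 1) ^ 2) := by positivity
  linarith

/-- Refined bounds on the constants c_k^*. -/
theorem cstar_refined_bounds (k : ℕ) :
    1 / (8 * ((k : ℝ) + 1)) < cstar k - (k : ℝ) - 1 / 2 ∧
    cstar k - (k : ℝ) - 1 / 2 < 1 / (8 * cstar k) ∧
    1 / (8 * cstar k) < 1 / (8 * ((k : ℝ) + 1 / 2)) := by
  have hlow : cstarLower k < cstar k := lt_cstar cstarLower_mem_Ioc cstarLower_step k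
  have hupp : cstar k < cstarUpper k := cstar_lt cstarUpper_mem_Ioc cstarUpper_step k
  have h₁ : 1 / (8 * ((k : ℝ) + 1)) < cstar k - k - 1 / 2 := by
    unfold cstarLower at hlow; linarith
  have hhalf : (k : ℝ) + 1 / 2 < cstar k := by
    linarith [show 0 < 1 / (8 * ((k : ℝ) + 1)) by positivity]
  refine ⟨h₁, ?_, one_div_lt_one_div_of_lt (by positivity) (by linarith)⟩
  have hu := cstarUpper_mul_sub_lt k
  rw [lt_div_iff₀ (mul_pos (by norm_num) (cstar_pos k))]
  nlinarith [mul_pos (sub_pos.2 hupp) (sub_pos.2 hhalf)]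
end

section
/- For every even integer k ≥ 2, one has √(c_k*) = √(2/π)·2^k / C(k, k/2), where C(k, k/2) is the central binomial coefficient, and the quantity √π · C(k, k/2) · 2^{−(k+1/2)} · √(k + 1/2), which equals √((k + 1/2)/c_k*), lies in the closed interval [1 − 1/(16(k + 1/2)²), 1]. -/
open MeasureTheory Real

/-!
With `a n = C(2n, n) / 4^n`, unfolding the recursion twice at a time gives
`c_{2m}^* = 2 / (π a_m²)`, so `(k + 1/2) / c_k^* = π (m + 1/4) a_m² =: f m` for `k = 2m`.
Wallis' product shows `π (m + 1/2) a_m² → 1`, hence `f m → 1`. Since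
`a_{m+1} = a_m (2m+1)/(2m+2)`, the ratio `f (m+1) / f m` is an explicit rational function of `m`:
it is at least `1`, so `f` increases to its limit and `f m ≤ 1`; and a polynomial inequality shows
that `f m / (1 - 1/(64 (m + 1/4)²))²` decreases to `1`, which gives the lower bound.
-/

open Filter Topology

noncomputable def centralBinomRatio (n : ℕ) : ℝ := n.centralBinom / 4 ^ n

lemma centralBinomRatio_pos (n : ℕ) : 0 < centralBinomRatio n := by
  have := n.centralBinom_pos
  unfold centralBinomRatio
  positivity

lemma centralBinomRatio_succ (n : ℕ) :
    centralBinomRatio (n + 1) = centralBinomRatio n * ((2 * n + 1) / (2 * n + 2)) := by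
  have h : ((n : ℝ) + 1) * (n + 1).centralBinom = 2 * (2 * n + 1) * n.centralBinom := by
    exact_mod_cast n.succ_mul_centralBinom_succ
  unfold centralBinomRatio
  field_simp
  linear_combination 2 * (4 : ℝ) ^ n * h

lemma Real.Wallis.W_mul_centralBinomRatio_sq (n : ℕ) :
    Wallis.W n * ((2 * n + 1) * centralBinomRatio n ^ 2) = 1 := by
  induction n with
  | zero => simp [Wallis.W, centralBinomRatio]
  | succ n ih =>
    rw [Wallis.W_succ, centralBinomRatio_succ]
    convert ih using 1
    push_cast
    field_simp
    ring

lemma tendsto_pi_mul_add_half_mul_centralBinomRatio_sq :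
    Tendsto (fun n : ℕ ↦ π * (n + 1 / 2) * centralBinomRatio n ^ 2) atTop (𝓝 1) := by
  have h := (Wallis.tendsto_W_nhds_pi_div_two.inv₀ pi_div_two_pos.ne').const_mul (π / 2)
  rw [mul_inv_cancel₀ pi_div_two_pos.ne'] at h
  refine h.congr fun n ↦ ?_
  rw [inv_eq_of_mul_eq_one_right (Wallis.W_mul_centralBinomRatio_sq n)]
  ring

lemma tendsto_inv_natCast_add_atTop (c : ℝ) :
    Tendsto (fun n : ℕ ↦ ((n : ℝ) + c)⁻¹) atTop (𝓝 0) :=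
  (tendsto_atTop_add_const_right _ c tendsto_natCast_atTop_atTop).inv_tendsto_atTop

noncomputable def wallisQuarter (n : ℕ) : ℝ := π * (n + 1 / 4) * centralBinomRatio n ^ 2

lemma wallisQuarter_pos (n : ℕ) : 0 < wallisQuarter n := by
  have := centralBinomRatio_pos n
  unfold wallisQuarter
  positivity

noncomputable def wallisQuarterRatio (x : ℝ) : ℝ :=
  (x + 5 / 4) / (x + 1 / 4) * ((2 * x + 1) / (2 * x + 2)) ^ 2

lemma wallisQuarter_succ (n : ℕ) :
    wallisQuarter (n + 1) = wallisQuarter n * wallisQuarterRatio n := by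
  unfold wallisQuarter wallisQuarterRatio
  rw [centralBinomRatio_succ]
  field_simp
  push_cast
  ring

lemma tendsto_wallisQuarter : Tendsto wallisQuarter atTop (𝓝 1) := by
  have h := tendsto_pi_mul_add_half_mul_centralBinomRatio_sq.mul
    (tendsto_const_nhds (x := (1 : ℝ)) |>.sub
      ((tendsto_inv_natCast_add_atTop (1 / 2)).const_mul (1 / 4)))
  rw [mul_zero, sub_zero, mul_one] at h
  refine h.congr fun n ↦ ?_
  unfold wallisQuarter
  field_simp
  ring

lemma one_le_wallisQuarterRatio {x : ℝ} (hx : 0 ≤ x) : 1 ≤ wallisQuarterRatio x := by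
  rw [wallisQuarterRatio, div_pow, div_mul_div_comm, one_le_div (by positivity)]
  nlinarith

lemma wallisQuarter_mono : Monotone wallisQuarter :=
  monotone_nat_of_le_succ fun n ↦ by
    rw [wallisQuarter_succ]
    exact le_mul_of_one_le_right (wallisQuarter_pos n).le
      (one_le_wallisQuarterRatio n.cast_nonneg)

lemma wallisQuarter_le_one (n : ℕ) : wallisQuarter n ≤ 1 :=
  wallisQuarter_mono.ge_of_tendsto tendsto_wallisQuarter n

noncomputable def wallisLowerFactor (x : ℝ) : ℝ := 1 - 1 / (64 * (x + 1 / 4) ^ 2)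

lemma wallisLowerFactor_pos {x : ℝ} (hx : 0 ≤ x) : 0 < wallisLowerFactor x := by
  unfold wallisLowerFactor
  rw [sub_pos, div_lt_one (by positivity)]
  nlinarith

lemma tendsto_wallisLowerFactor :
    Tendsto (fun n : ℕ ↦ wallisLowerFactor n) atTop (𝓝 1) := by
  have h := tendsto_const_nhds (x := (1 : ℝ)) |>.sub
    (((tendsto_inv_natCast_add_atTop (1 / 4)).pow 2).const_mul (1 / 64))
  rw [zero_pow two_ne_zero, mul_zero, sub_zero] at h
  refine h.congr fun n ↦ ?_
  simp only [wallisLowerFactor, one_div, mul_inv, inv_pow]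

-- The leading terms cancel after clearing denominators; the remaining numerator has positive
-- coefficients.
lemma wallisQuarterRatio_mul_wallisLowerFactor_sq_le {x : ℝ} (hx : 0 ≤ x) :
    wallisQuarterRatio x * wallisLowerFactor x ^ 2 ≤ wallisLowerFactor (x + 1) ^ 2 := by
  have key : wallisLowerFactor (x + 1) ^ 2 - wallisQuarterRatio x * wallisLowerFactor x ^ 2 =
      (11079 + 164208 * x + 878432 * x ^ 2 + 2186496 * x ^ 3 + 2664192 * x ^ 4
        + 1548288 * x ^ 5 + 344064 * x ^ 6) /
      (16 * (4 * x + 5) ^ 4 * (4 * x + 1) ^ 5 * (2 * x + 2) ^ 2) := by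
    unfold wallisLowerFactor wallisQuarterRatio
    field_simp
    ring
  rw [← sub_nonneg, key]
  positivity

noncomputable def wallisQuarterCorrected (n : ℕ) : ℝ :=
  wallisQuarter n / wallisLowerFactor n ^ 2

lemma wallisQuarterCorrected_anti : Antitone wallisQuarterCorrected :=
  antitone_nat_of_succ_le fun n ↦ by
    have hn := wallisLowerFactor_pos n.cast_nonneg
    have hn' := wallisLowerFactor_pos (n + 1).cast_nonneg
    unfold wallisQuarterCorrected
    rw [div_le_div_iff₀ (by positivity) (by positivity), wallisQuarter_succ, mul_assoc,
      Nat.cast_succ]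
    exact mul_le_mul_of_nonneg_left
      (wallisQuarterRatio_mul_wallisLowerFactor_sq_le n.cast_nonneg) (wallisQuarter_pos n).le

lemma tendsto_wallisQuarterCorrected : Tendsto wallisQuarterCorrected atTop (𝓝 1) := by
  have h := tendsto_wallisQuarter.div (tendsto_wallisLowerFactor.pow 2) (by norm_num)
  rwa [one_pow, div_one] at h

lemma wallisLowerFactor_sq_le_wallisQuarter (n : ℕ) :
    wallisLowerFactor n ^ 2 ≤ wallisQuarter n := by
  have h := wallisQuarterCorrected_anti.le_of_tendsto tendsto_wallisQuarterCorrected n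
  have := wallisLowerFactor_pos n.cast_nonneg
  rwa [wallisQuarterCorrected, one_le_div (by positivity)] at h

lemma cstar_add_self (m : ℕ) : cstar (m + m) = 2 / π / centralBinomRatio m ^ 2 := by
  induction m with
  | zero => simp [cstar, centralBinomRatio]
  | succ m ih =>
    have := centralBinomRatio_pos m
    rw [show m + 1 + (m + 1) = m + m + 1 + 1 by ring, cstar, cstar, ih, centralBinomRatio_succ]
    field_simp
    push_cast
    ring

lemma add_half_div_cstar_add_self (m : ℕ) :
    (((m + m : ℕ) : ℝ) + 1 / 2) / cstar (m + m) = wallisQuarter m := by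
  rw [cstar_add_self, wallisQuarter]
  field_simp
  push_cast
  ring

lemma choose_add_self_div_two (m : ℕ) :
    ((m + m).choose ((m + m) / 2) : ℝ) = 2 ^ (m + m) * centralBinomRatio m := by
  rw [show (m + m) / 2 = m by omega, ← two_mul, ← Nat.centralBinom_eq_two_mul_choose, pow_mul,
    centralBinomRatio]
  norm_num
  field_simp

lemma two_rpow_neg_natCast_add_half (k : ℕ) :
    (2 : ℝ) ^ (-((k : ℝ) + 1 / 2)) = (2 ^ k * √2)⁻¹ := by
  rw [rpow_neg zero_le_two, rpow_add two_pos, rpow_natCast, ← sqrt_eq_rpow]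

theorem cstar_central_binomial_general (k : ℕ) (hke : Even k) :
    Real.sqrt (cstar k) = Real.sqrt (2 / Real.pi) * 2 ^ k / (k.choose (k / 2) : ℝ) ∧
    Real.sqrt Real.pi * (k.choose (k / 2) : ℝ) * (2 : ℝ) ^ (-((k : ℝ) + 1 / 2)) *
        Real.sqrt ((k : ℝ) + 1 / 2) =
      Real.sqrt (((k : ℝ) + 1 / 2) / cstar k) ∧
    Real.sqrt (((k : ℝ) + 1 / 2) / cstar k) ∈
      Set.Icc (1 - 1 / (16 * ((k : ℝ) + 1 / 2) ^ 2)) 1 := by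
  obtain ⟨m, rfl⟩ := hke
  have ha := centralBinomRatio_pos m
  refine ⟨?_, ?_, ?_⟩
  · rw [cstar_add_self, sqrt_div' _ (sq_nonneg _), sqrt_sq ha.le, choose_add_self_div_two]
    field_simp
  · rw [add_half_div_cstar_add_self, eq_comm,
      sqrt_eq_iff_eq_sq (wallisQuarter_pos m).le (by positivity), two_rpow_neg_natCast_add_half,
      choose_add_self_div_two, wallisQuarter]
    have hk : (0 : ℝ) ≤ ((m + m : ℕ) : ℝ) + 1 / 2 := by positivity
    simp only [mul_pow, inv_pow, sq_sqrt pi_pos.le, sq_sqrt zero_le_two, sq_sqrt hk]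
    field_simp
    push_cast
    ring
  · have hfactor : 1 - 1 / (16 * (((m + m : ℕ) : ℝ) + 1 / 2) ^ 2) = wallisLowerFactor m := by
      rw [wallisLowerFactor]
      push_cast
      ring
    rw [add_half_div_cstar_add_self, hfactor]
    exact ⟨(le_abs_self _).trans (abs_le_sqrt (wallisLowerFactor_sq_le_wallisQuarter m)),
      sqrt_le_one.mpr (wallisQuarter_le_one m)⟩

/-- For even k ≥ 2, √(c_k^*) = √(2/π)·2^k / C(k, k/2), and
√π·C(k,k/2)·2^{-(k+1/2)}·√(k+1/2) = √((k+1/2)/c_k^*) ∈ [1 - 1/(16(k+1/2)²), 1]. -/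
theorem cstar_central_binomial (k : ℕ) (hk : 2 ≤ k) (hke : Even k) :
    Real.sqrt (cstar k) = Real.sqrt (2 / Real.pi) * 2 ^ k / (k.choose (k / 2) : ℝ) ∧
    Real.sqrt Real.pi * (k.choose (k / 2) : ℝ) * (2 : ℝ) ^ (-((k : ℝ) + 1 / 2)) *
        Real.sqrt ((k : ℝ) + 1 / 2) =
      Real.sqrt (((k : ℝ) + 1 / 2) / cstar k) ∧
    Real.sqrt (((k : ℝ) + 1 / 2) / cstar k) ∈
      Set.Icc (1 - 1 / (16 * ((k : ℝ) + 1 / 2) ^ 2)) 1 :=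
  cstar_central_binomial_general k hke
end
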